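/- Let A, E ∈ ℂ^{n×n} be skew-Hermitian matrices (Aᴴ = −A, Eᴴ = −E) such that the pencil L(s) = A + sE is regular. Then the infimum of √(‖Δ_A‖² + ‖Δ_E‖²) over all pairs of skew-Hermitian matrices (Δ_A, Δ_E) for which there exists a nonzero v ∈ ℂⁿ with (A − Δ_A)v = 0 and (E − Δ_E)v = 0 equals √(λ_min(AᴴA + EᴴE)). -/

import Mathlib

open Matrix

/-- The spectral norm (ℓ² operator norm) of a complex matrix. -/
noncomputable def specNorm {k : Type*} [Fintype k] [DecidableEq k]
    (X : Matrix k k ℂ) : ℝ :=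
  ‖Matrix.toEuclideanCLM (𝕜 := ℂ) X‖

/-- The smallest eigenvalue of a Hermitian matrix (junk value `0` otherwise). -/
noncomputable def lamMin {k : Type*} [Fintype k] [DecidableEq k]
    (H : Matrix k k ℂ) : ℝ :=
  if h : H.IsHermitian then ⨅ i, h.eigenvalues i else 0

/-!
If `v` is a common null vector of `A - ΔA` and `E - ΔE`, then
`‖A v‖² + ‖E v‖² = ‖ΔA v‖² + ‖ΔE v‖² ≤ (‖ΔA‖² + ‖ΔE‖²) ‖v‖²`, and the left side is the Rayleigh
quotient `⟪v, (AᴴA + EᴴE) v⟫`, which is at least `λ_min ‖v‖²`. Conversely, take `v` a unit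
eigenvector for `λ_min`. Because `A` is skew-Hermitian, `⟪v, A v⟫` is purely imaginary, and this is
exactly what is needed for a skew-Hermitian `ΔA` with `ΔA v = A v` and `‖ΔA‖ ≤ ‖A v‖` to exist
(likewise for `E`); this pair attains the bound. For `n = 0` both sides are the junk value `0`.
-/

open scoped InnerProductSpace
open InnerProductSpace RCLike

section

variable {𝕜 E : Type*} [RCLike 𝕜] [NormedAddCommGroup E] [InnerProductSpace 𝕜 E]

theorem OrthonormalBasis.iInf_mul_norm_sq_le_re_inner_apply {ι : Type*} [Fintype ι]
    (b : OrthonormalBasis ι 𝕜 E) {T : E →ₗ[𝕜] E} {μ : ι → ℝ}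
    (hT : ∀ i, T (b i) = (μ i : 𝕜) • b i) (x : E) :
    (⨅ i, μ i) * ‖x‖ ^ 2 ≤ re ⟪x, T x⟫_𝕜 := by
  have hTx : T x = ∑ i, (⟪b i, x⟫_𝕜 * μ i) • b i := by
    conv_lhs => rw [← b.sum_repr' x]
    simp only [map_sum, map_smul, hT, smul_smul]
  have hre : re ⟪x, T x⟫_𝕜 = ∑ i, μ i * ‖⟪b i, x⟫_𝕜‖ ^ 2 := by
    simp only [hTx, inner_sum, inner_smul_right, map_sum]
    refine Finset.sum_congr rfl fun i _ => ?_
    rw [← inner_conj_symm x, mul_comm, ← mul_assoc, RCLike.conj_mul]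
    rw [← ofReal_pow, ← ofReal_mul, ofReal_re, mul_comm]
  rw [hre, ← b.sum_sq_norm_inner_right x, Finset.mul_sum]
  gcongr with i
  exact ciInf_le (Set.finite_range μ).bddBelow i

namespace Matrix.IsHermitian

variable {n : Type*} [Fintype n] [DecidableEq n] {H : Matrix n n 𝕜} (hH : H.IsHermitian)
include hH

theorem toEuclideanCLM_eigenvectorBasis (i : n) :
    toEuclideanCLM (𝕜 := 𝕜) H (hH.eigenvectorBasis i) =
      (hH.eigenvalues i : 𝕜) • hH.eigenvectorBasis i := by
  apply (WithLp.ofLp_injective 2)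
  rw [ofLp_toEuclideanCLM, hH.mulVec_eigenvectorBasis, WithLp.ofLp_smul,
    RCLike.real_smul_eq_coe_smul (K := 𝕜)]

theorem iInf_eigenvalues_mul_norm_sq_le (x : EuclideanSpace 𝕜 n) :
    (⨅ i, hH.eigenvalues i) * ‖x‖ ^ 2 ≤ re ⟪x, toEuclideanCLM (𝕜 := 𝕜) H x⟫_𝕜 :=
  hH.eigenvectorBasis.iInf_mul_norm_sq_le_re_inner_apply
    (T := (toEuclideanCLM (𝕜 := 𝕜) H).toLinearMap) hH.toEuclideanCLM_eigenvectorBasis x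

end Matrix.IsHermitian

namespace ContinuousLinearMap

variable [CompleteSpace E]

theorem re_inner_star_mul_self_add_star_mul_self (A B : E →L[𝕜] E) (x : E) :
    re ⟪x, (star A * A + star B * B) x⟫_𝕜 = ‖A x‖ ^ 2 + ‖B x‖ ^ 2 := by
  simp only [star_eq_adjoint, apply_norm_sq_eq_inner_adjoint_right, _root_.add_apply,
    inner_add_right, map_add, mul_def]

end ContinuousLinearMap

theorem RCLike.norm_mul_sub_mul_sq_add_norm_mul_sub_mul_sq {α : 𝕜} (hα : star α = -α) (β : ℝ)
    (s t : 𝕜) :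
    ‖α * s - β * t‖ ^ 2 + ‖β * s - α * t‖ ^ 2 = (‖α‖ ^ 2 + β ^ 2) * (‖s‖ ^ 2 + ‖t‖ ^ 2) := by
  have hre : re α = 0 := by
    have := congrArg re hα
    rw [RCLike.star_def, conj_re, map_neg] at this
    linarith
  simp only [RCLike.norm_sq_eq_def, map_sub, mul_re, mul_im, ofReal_re, ofReal_im, hre]
  ring

theorem Orthonormal.norm_smul_add_smul_sq {v u : E} (h : Orthonormal 𝕜 ![v, u]) (c d : 𝕜) :
    ‖c • v + d • u‖ ^ 2 = ‖c‖ ^ 2 + ‖d‖ ^ 2 := by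
  have hv : ‖v‖ = 1 := by simpa using h.norm_eq_one 0
  have hu : ‖u‖ = 1 := by simpa using h.norm_eq_one 1
  have hvu : ⟪v, u⟫_𝕜 = 0 := by simpa using h.inner_eq_zero (i := 0) (j := 1) (by decide)
  rw [sq, sq, sq, norm_add_sq_eq_norm_sq_add_norm_sq_of_inner_eq_zero (𝕜 := 𝕜) _ _
    (by simp [inner_smul_left, inner_smul_right, hvu]), norm_smul, norm_smul, hv, hu]
  ring

theorem Orthonormal.norm_inner_sq_add_norm_inner_sq_le {v u : E} (h : Orthonormal 𝕜 ![v, u])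
    (x : E) : ‖⟪v, x⟫_𝕜‖ ^ 2 + ‖⟪u, x⟫_𝕜‖ ^ 2 ≤ ‖x‖ ^ 2 := by
  simpa [Fin.sum_univ_two] using h.sum_inner_products_le x (s := Finset.univ)

/-- In the orthonormal pair `(v, u)` this acts as `!![α, -β; β, -α]` and vanishes on the orthogonal
complement. For `α` purely imaginary its square is `-(‖α‖² + β²)` on the plane, so its norm is
exactly `‖α • v + β • u‖`; without the `-α` corner it would be larger. -/
noncomputable def skewPlaneMap (v u : E) (α : 𝕜) (β : ℝ) : E →L[𝕜] E :=
  α • (rankOne 𝕜 v v - rankOne 𝕜 u u) + (β : 𝕜) • (rankOne 𝕜 u v - rankOne 𝕜 v u)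

theorem skewPlaneMap_apply (v u : E) (α : 𝕜) (β : ℝ) (x : E) :
    skewPlaneMap v u α β x =
      (α * ⟪v, x⟫_𝕜 - β * ⟪u, x⟫_𝕜) • v + (β * ⟪v, x⟫_𝕜 - α * ⟪u, x⟫_𝕜) • u := by
  simp only [skewPlaneMap, _root_.add_apply, _root_.smul_apply, _root_.sub_apply, rankOne_apply]
  module

theorem norm_skewPlaneMap_le {v u : E} (h : Orthonormal 𝕜 ![v, u]) {α : 𝕜} (hα : star α = -α)
    (β : ℝ) : ‖skewPlaneMap v u α β‖ ≤ ‖α • v + (β : 𝕜) • u‖ := by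
  refine ContinuousLinearMap.opNorm_le_bound _ (norm_nonneg _) fun x => ?_
  refine (sq_le_sq₀ (norm_nonneg _) (by positivity)).mp ?_
  rw [skewPlaneMap_apply, mul_pow, h.norm_smul_add_smul_sq, h.norm_smul_add_smul_sq,
    RCLike.norm_mul_sub_mul_sq_add_norm_mul_sub_mul_sq hα, norm_ofReal, sq_abs]
  gcongr
  exact h.norm_inner_sq_add_norm_inner_sq_le x

variable [CompleteSpace E]

theorem skewPlaneMap_mem_skewAdjoint (v u : E) {α : 𝕜} (hα : star α = -α) (β : ℝ) :
    skewPlaneMap v u α β ∈ skewAdjoint (E →L[𝕜] E) := by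
  rw [skewAdjoint.mem_iff, skewPlaneMap]
  simp only [star_add, star_smul, star_sub, hα, ContinuousLinearMap.star_eq_adjoint,
    adjoint_rankOne, RCLike.star_def, conj_ofReal]
  module

theorem star_inner_apply_self_of_mem_skewAdjoint {S : E →L[𝕜] E}
    (hS : S ∈ skewAdjoint (E →L[𝕜] E)) (v : E) : star ⟪v, S v⟫_𝕜 = -⟪v, S v⟫_𝕜 := by
  rw [RCLike.star_def, inner_conj_symm, ← ContinuousLinearMap.adjoint_inner_right,
    ← ContinuousLinearMap.star_eq_adjoint, skewAdjoint.mem_iff.mp hS, _root_.neg_apply,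
    inner_neg_right]

theorem exists_mem_skewAdjoint_apply_eq_norm_le {S : E →L[𝕜] E}
    (hS : S ∈ skewAdjoint (E →L[𝕜] E)) {v : E} (hv : ‖v‖ = 1) :
    ∃ T ∈ skewAdjoint (E →L[𝕜] E), T v = S v ∧ ‖T‖ ≤ ‖S v‖ := by
  set α := ⟪v, S v⟫_𝕜
  have hα : star α = -α := star_inner_apply_self_of_mem_skewAdjoint hS v
  have hvv : ⟪v, v⟫_𝕜 = 1 := by rw [inner_self_eq_norm_sq_to_K, hv]; simp
  set w := S v - α • v with hw
  have hvw : ⟪v, w⟫_𝕜 = 0 := by simp [hw, α, inner_sub_right, inner_smul_right, hv]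
  by_cases hw0 : w = 0
  · have hSv : S v = α • v := sub_eq_zero.mp hw0
    refine ⟨α • rankOne 𝕜 v v, ?_, ?_, ?_⟩
    · rw [skewAdjoint.mem_iff, star_smul, hα, ContinuousLinearMap.star_eq_adjoint,
        adjoint_rankOne, neg_smul]
    · simp [hSv, hv]
    · simp [hSv, norm_smul, hv]
  · set u := ((‖w‖⁻¹ : ℝ) : 𝕜) • w
    have hw' : ‖w‖ ≠ 0 := norm_ne_zero_iff.mpr hw0
    have hu : Orthonormal 𝕜 ![v, u] := by
      simp [u, hv, norm_smul, hw', inner_smul_right, hvw]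
    have hSv : S v = α • v + ((‖w‖ : ℝ) : 𝕜) • u := by
      rw [smul_smul, ← ofReal_mul, mul_inv_cancel₀ hw', ofReal_one, one_smul, hw]
      abel
    have huv : ⟪u, v⟫_𝕜 = 0 :=
      inner_eq_zero_symm.mp (hu.inner_eq_zero (i := 0) (j := 1) (by decide))
    refine ⟨skewPlaneMap v u α ‖w‖, skewPlaneMap_mem_skewAdjoint v u hα _, ?_,
      hSv ▸ norm_skewPlaneMap_le hu hα _⟩
    rw [skewPlaneMap_apply, hvv, huv, hSv]
    simp

namespace Matrix

variable {n : Type*} [Fintype n] [DecidableEq n]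

theorem sub_mulVec_ofLp_eq_zero_iff {X Y : Matrix n n 𝕜} {x : EuclideanSpace 𝕜 n} :
    (X - Y) *ᵥ WithLp.ofLp x = 0 ↔
      toEuclideanCLM (𝕜 := 𝕜) X x = toEuclideanCLM (𝕜 := 𝕜) Y x := by
  rw [← ofLp_toEuclideanCLM, map_sub, _root_.sub_apply, WithLp.ofLp_eq_zero, sub_eq_zero]

theorem conjTranspose_eq_neg_iff_toEuclideanCLM_mem_skewAdjoint {X : Matrix n n 𝕜} :
    Xᴴ = -X ↔
      toEuclideanCLM (𝕜 := 𝕜) X ∈ skewAdjoint (EuclideanSpace 𝕜 n →L[𝕜] EuclideanSpace 𝕜 n) := by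
  rw [skewAdjoint.mem_iff, ← map_star, ← map_neg, EmbeddingLike.apply_eq_iff_eq,
    star_eq_conjTranspose]

end Matrix

end

section

variable {n : Type*} [Fintype n] [DecidableEq n]

theorem lamMin_eq_iInf {H : Matrix n n ℂ} (hH : H.IsHermitian) :
    lamMin H = ⨅ i, hH.eigenvalues i :=
  dif_pos hH

theorem lamMin_of_isEmpty [IsEmpty n] (H : Matrix n n ℂ) : lamMin H = 0 := by
  unfold lamMin
  split_ifs <;> simp

theorem toEuclideanCLM_conjTranspose_mul_self_add (A E : Matrix n n ℂ) :
    toEuclideanCLM (𝕜 := ℂ) (Aᴴ * A + Eᴴ * E) =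
      star (toEuclideanCLM (𝕜 := ℂ) A) * toEuclideanCLM (𝕜 := ℂ) A +
        star (toEuclideanCLM (𝕜 := ℂ) E) * toEuclideanCLM (𝕜 := ℂ) E := by
  rw [← star_eq_conjTranspose, ← star_eq_conjTranspose, map_add, map_mul, map_mul, map_star,
    map_star]

theorem lamMin_le_specNorm_sq_add_specNorm_sq {A E DA DE : Matrix n n ℂ} {v : n → ℂ}
    (hv : v ≠ 0) (hAv : (A - DA) *ᵥ v = 0) (hEv : (E - DE) *ᵥ v = 0) :
    lamMin (Aᴴ * A + Eᴴ * E) ≤ specNorm DA ^ 2 + specNorm DE ^ 2 := by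
  have hH := (isHermitian_conjTranspose_mul_self A).add (isHermitian_conjTranspose_mul_self E)
  set x : EuclideanSpace ℂ n := WithLp.toLp 2 v
  have hx : 0 < ‖x‖ ^ 2 := by
    have : x ≠ 0 := by simpa [x] using hv
    positivity
  have hAx : toEuclideanCLM (𝕜 := ℂ) A x = toEuclideanCLM (𝕜 := ℂ) DA x :=
    sub_mulVec_ofLp_eq_zero_iff.mp hAv
  have hEx : toEuclideanCLM (𝕜 := ℂ) E x = toEuclideanCLM (𝕜 := ℂ) DE x :=
    sub_mulVec_ofLp_eq_zero_iff.mp hEv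
  rw [lamMin_eq_iInf hH]
  refine le_of_mul_le_mul_right ?_ hx
  calc (⨅ i, hH.eigenvalues i) * ‖x‖ ^ 2
      ≤ re ⟪x, toEuclideanCLM (𝕜 := ℂ) (Aᴴ * A + Eᴴ * E) x⟫_ℂ :=
        hH.iInf_eigenvalues_mul_norm_sq_le x
    _ = ‖toEuclideanCLM (𝕜 := ℂ) DA x‖ ^ 2 + ‖toEuclideanCLM (𝕜 := ℂ) DE x‖ ^ 2 := by
        rw [toEuclideanCLM_conjTranspose_mul_self_add,
          ContinuousLinearMap.re_inner_star_mul_self_add_star_mul_self, hAx, hEx]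
    _ ≤ (specNorm DA * ‖x‖) ^ 2 + (specNorm DE * ‖x‖) ^ 2 := by
        gcongr <;> exact ContinuousLinearMap.le_opNorm _ _
    _ = (specNorm DA ^ 2 + specNorm DE ^ 2) * ‖x‖ ^ 2 := by ring

theorem exists_skewHermitian_common_null_vector_specNorm_sq_add_le_lamMin [Nonempty n]
    {A E : Matrix n n ℂ} (hA : Aᴴ = -A) (hE : Eᴴ = -E) :
    ∃ (DA DE : Matrix n n ℂ) (v : n → ℂ), DAᴴ = -DA ∧ DEᴴ = -DE ∧ v ≠ 0 ∧
      (A - DA) *ᵥ v = 0 ∧ (E - DE) *ᵥ v = 0 ∧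
      specNorm DA ^ 2 + specNorm DE ^ 2 ≤ lamMin (Aᴴ * A + Eᴴ * E) := by
  have hH := (isHermitian_conjTranspose_mul_self A).add (isHermitian_conjTranspose_mul_self E)
  obtain ⟨i, hi⟩ := exists_eq_ciInf_of_finite (f := hH.eigenvalues)
  set x := hH.eigenvectorBasis i
  have hx : ‖x‖ = 1 := hH.eigenvectorBasis.orthonormal.1 i
  obtain ⟨TA, hTA, hTAx, hTA_le⟩ := exists_mem_skewAdjoint_apply_eq_norm_le
    (conjTranspose_eq_neg_iff_toEuclideanCLM_mem_skewAdjoint.mp hA) hx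
  obtain ⟨TE, hTE, hTEx, hTE_le⟩ := exists_mem_skewAdjoint_apply_eq_norm_le
    (conjTranspose_eq_neg_iff_toEuclideanCLM_mem_skewAdjoint.mp hE) hx
  obtain ⟨DA, rfl⟩ := EquivLike.surjective (toEuclideanCLM (n := n) (𝕜 := ℂ)) TA
  obtain ⟨DE, rfl⟩ := EquivLike.surjective (toEuclideanCLM (n := n) (𝕜 := ℂ)) TE
  have hrayleigh : ‖toEuclideanCLM (𝕜 := ℂ) A x‖ ^ 2 + ‖toEuclideanCLM (𝕜 := ℂ) E x‖ ^ 2 =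
      hH.eigenvalues i := by
    rw [← ContinuousLinearMap.re_inner_star_mul_self_add_star_mul_self,
      ← toEuclideanCLM_conjTranspose_mul_self_add, hH.toEuclideanCLM_eigenvectorBasis,
      inner_smul_right, inner_self_eq_norm_sq_to_K, hx]
    simp
  refine ⟨DA, DE, WithLp.ofLp x,
    conjTranspose_eq_neg_iff_toEuclideanCLM_mem_skewAdjoint.mpr hTA,
    conjTranspose_eq_neg_iff_toEuclideanCLM_mem_skewAdjoint.mpr hTE,
    by simpa using hH.eigenvectorBasis.orthonormal.ne_zero i,
    sub_mulVec_ofLp_eq_zero_iff.mpr hTAx.symm, sub_mulVec_ofLp_eq_zero_iff.mpr hTEx.symm, ?_⟩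
  rw [lamMin_eq_iInf hH, ← hi, ← hrayleigh, specNorm, specNorm]
  gcongr

end

theorem skewHermitian_distance_to_common_null_space_general
    {n : ℕ} (A E : Matrix (Fin n) (Fin n) ℂ)
    (hA : Aᴴ = -A) (hE : Eᴴ = -E) :
    sInf {r : ℝ | ∃ (DA DE : Matrix (Fin n) (Fin n) ℂ) (v : Fin n → ℂ),
        DAᴴ = -DA ∧ DEᴴ = -DE ∧
        v ≠ 0 ∧ (A - DA).mulVec v = 0 ∧ (E - DE).mulVec v = 0 ∧
        r = Real.sqrt (specNorm DA ^ 2 + specNorm DE ^ 2)} =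
      Real.sqrt (lamMin (Aᴴ * A + Eᴴ * E)) := by
  set S := {r : ℝ | ∃ (DA DE : Matrix (Fin n) (Fin n) ℂ) (v : Fin n → ℂ),
        DAᴴ = -DA ∧ DEᴴ = -DE ∧
        v ≠ 0 ∧ (A - DA).mulVec v = 0 ∧ (E - DE).mulVec v = 0 ∧
        r = Real.sqrt (specNorm DA ^ 2 + specNorm DE ^ 2)}
  have hlower : Real.sqrt (lamMin (Aᴴ * A + Eᴴ * E)) ∈ lowerBounds S := by
    rintro r ⟨DA, DE, v, -, -, hv, hAv, hEv, rfl⟩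
    exact Real.sqrt_le_sqrt (lamMin_le_specNorm_sq_add_specNorm_sq hv hAv hEv)
  rcases isEmpty_or_nonempty (Fin n) with hn | hn
  · have hS : S = ∅ := Set.eq_empty_of_forall_notMem <| by
      rintro r ⟨-, -, v, -, -, hv, -⟩
      exact hv (Subsingleton.elim v 0)
    rw [hS, Real.sInf_empty, lamMin_of_isEmpty, Real.sqrt_zero]
  · obtain ⟨DA, DE, v, hDA, hDE, hv, hAv, hEv, hle⟩ :=
      exists_skewHermitian_common_null_vector_specNorm_sq_add_le_lamMin hA hE
    have hmem : Real.sqrt (specNorm DA ^ 2 + specNorm DE ^ 2) ∈ S :=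
      ⟨DA, DE, v, hDA, hDE, hv, hAv, hEv, rfl⟩
    refine IsLeast.csInf_eq ⟨?_, hlower⟩
    rwa [← le_antisymm (hlower hmem) (Real.sqrt_le_sqrt hle)] at hmem

/-- For a regular skew-Hermitian pencil the structured distance to a common null
space equals `√(λ_min(AᴴA + EᴴE))`. -/
theorem skewHermitian_distance_to_common_null_space
    {n : ℕ} (A E : Matrix (Fin n) (Fin n) ℂ)
    (hA : Aᴴ = -A) (hE : Eᴴ = -E)
    (hreg : ∃ l : ℂ, (A + l • E).det ≠ 0) :
    sInf {r : ℝ | ∃ (DA DE : Matrix (Fin n) (Fin n) ℂ) (v : Fin n → ℂ),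
        DAᴴ = -DA ∧ DEᴴ = -DE ∧
        v ≠ 0 ∧ (A - DA).mulVec v = 0 ∧ (E - DE).mulVec v = 0 ∧
        r = Real.sqrt (specNorm DA ^ 2 + specNorm DE ^ 2)} =
      Real.sqrt (lamMin (Aᴴ * A + Eᴴ * E)) :=
  skewHermitian_distance_to_common_null_space_general A E hA hE
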